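/- Let n ≥ 1 and let L : ℝⁿ → ℝ be differentiable, strictly convex and superlinear. Then the gradient map ℝⁿ → ℝⁿ, v ↦ ∇L(v), is a bijection of ℝⁿ onto ℝⁿ. -/

import Mathlib

open Filter Bornology InnerProductSpace
open scoped RealInnerProductSpace

/-!
For a differentiable convex `f`, the first-order condition says that `∇f a = p` exactly when `a`
minimises the tilted function `v ↦ f v - ⟪p, v⟫`. Superlinearity of `f` makes every tilt coercive,
so it attains its minimum, and strict convexity makes the minimiser unique.
-/

section NormedSpace

variable {E : Type*} [NormedAddCommGroup E] [NormedSpace ℝ E] {f : E → ℝ}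

theorem ConvexOn.add_apply_sub_le_of_hasFDerivAt {f' : E →L[ℝ] ℝ} {x : E}
    (hf : ConvexOn ℝ Set.univ f) (hfx : HasFDerivAt f f' x) (y : E) :
    f x + f' (y - x) ≤ f y := by
  set g : ℝ → ℝ := fun t => f (AffineMap.lineMap x y t)
  have hg : ConvexOn ℝ Set.univ g := hf.comp_affineMap (AffineMap.lineMap x y)
  have hline : HasDerivAt (fun t : ℝ => AffineMap.lineMap x y t) (y - x) 0 := by
    simpa using AffineMap.hasDerivAt_lineMap (a := x) (b := y) (x := 0)
  have hg' : HasDerivAt g (f' (y - x)) 0 := hfx.comp_hasDerivAt_of_eq 0 hline (by simp)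
  have hslope := hg.le_slope_of_hasDerivAt (Set.mem_univ 0) (Set.mem_univ 1) zero_lt_one hg'
  simp only [g, slope_def_field, AffineMap.lineMap_apply_zero, AffineMap.lineMap_apply_one,
    sub_zero, div_one] at hslope
  linarith

theorem tendsto_sub_continuousLinearMap_of_superlinear
    (hf : Tendsto (fun v => f v / ‖v‖) (cobounded E) atTop) (ℓ : E →L[ℝ] ℝ) :
    Tendsto (fun v => f v - ℓ v) (cobounded E) atTop := by
  have hprod : Tendsto (fun v => ‖v‖ * (f v / ‖v‖ - ‖ℓ‖)) (cobounded E) atTop :=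
    tendsto_norm_cobounded_atTop.atTop_mul_atTop₀ (tendsto_atTop_add_const_right _ _ hf)
  refine tendsto_atTop_mono' _ ?_ hprod
  filter_upwards [tendsto_norm_cobounded_atTop.eventually_gt_atTop 0] with v hv
  have hℓ : ℓ v ≤ ‖ℓ‖ * ‖v‖ := (le_abs_self _).trans (ℓ.le_opNorm v)
  rw [mul_sub, mul_div_cancel₀ _ hv.ne']
  linarith

theorem exists_isMinOn_sub_of_superlinear [ProperSpace E] (hc : Continuous f)
    (hf : Tendsto (fun v => f v / ‖v‖) (cobounded E) atTop) (ℓ : E →L[ℝ] ℝ) :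
    ∃ a, IsMinOn (fun v => f v - ℓ v) Set.univ a := by
  have hcoercive := tendsto_sub_continuousLinearMap_of_superlinear hf ℓ
  rw [Metric.cobounded_eq_cocompact] at hcoercive
  obtain ⟨a, ha⟩ := (hc.sub ℓ.continuous).exists_forall_le hcoercive
  exact ⟨a, fun v _ => ha v⟩

end NormedSpace

section InnerProductSpace

variable {E : Type*} [NormedAddCommGroup E] [InnerProductSpace ℝ E] [CompleteSpace E]
  {f : E → ℝ}

theorem ConvexOn.gradient_eq_iff_isMinOn_sub_inner (hf : ConvexOn ℝ Set.univ f) {a : E}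
    (ha : DifferentiableAt ℝ f a) (p : E) :
    gradient f a = p ↔ IsMinOn (fun v => f v - ⟪p, v⟫) Set.univ a := by
  have htilt : HasFDerivAt (fun v => f v - ⟪p, v⟫) (fderiv ℝ f a - toDual ℝ E p) a :=
    ha.hasFDerivAt.sub (toDual ℝ E p).hasFDerivAt
  have htilt_convex : ConvexOn ℝ Set.univ fun v => f v - ⟪p, v⟫ :=
    hf.sub ((toDual ℝ E p : E →L[ℝ] ℝ).toLinearMap.concaveOn convex_univ)
  rw [gradient, (toDual ℝ E).symm_apply_eq, ← sub_eq_zero]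
  constructor
  · intro h v _
    rw [h] at htilt
    simpa using htilt_convex.add_apply_sub_le_of_hasFDerivAt htilt v
  · exact fun h => (h.isLocalMin Filter.univ_mem).hasFDerivAt_eq_zero htilt

theorem StrictConvexOn.gradient_bijective_of_superlinear [ProperSpace E]
    (hdiff : Differentiable ℝ f) (hconv : StrictConvexOn ℝ Set.univ f)
    (hsl : Tendsto (fun v => f v / ‖v‖) (cobounded E) atTop) :
    Function.Bijective (gradient f) := by
  refine Function.bijective_iff_existsUnique _ |>.mpr fun p => ?_
  simp only [hconv.convexOn.gradient_eq_iff_isMinOn_sub_inner (hdiff _)]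
  obtain ⟨a, ha⟩ := exists_isMinOn_sub_of_superlinear hdiff.continuous hsl (toDual ℝ E p)
  have htilt_convex : StrictConvexOn ℝ Set.univ fun v => f v - ⟪p, v⟫ :=
    hconv.sub_concaveOn ((toDual ℝ E p : E →L[ℝ] ℝ).toLinearMap.concaveOn convex_univ)
  exact ⟨a, ha, fun b hb => htilt_convex.eq_of_isMinOn hb ha trivial trivial⟩

end InnerProductSpace

theorem gradient_bijective_of_strictConvex_superlinear_general (n : ℕ)
    (L : EuclideanSpace ℝ (Fin n) → ℝ)
    (hdiff : Differentiable ℝ L)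
    (hconv : StrictConvexOn ℝ Set.univ L)
    (hsl : Tendsto (fun v => L v / ‖v‖)
      (comap (fun v : EuclideanSpace ℝ (Fin n) => ‖v‖) atTop) atTop) :
    Function.Bijective (fun v : EuclideanSpace ℝ (Fin n) => gradient L v) :=
  hconv.gradient_bijective_of_superlinear hdiff (by rwa [comap_norm_atTop] at hsl)

/-- The gradient map of a differentiable, strictly convex, superlinear function
on ℝⁿ is a bijection of ℝⁿ onto ℝⁿ (the fibrewise Legendre transform). -/
theorem gradient_bijective_of_strictConvex_superlinear (n : ℕ) (hn : 1 ≤ n)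
    (L : EuclideanSpace ℝ (Fin n) → ℝ)
    (hdiff : Differentiable ℝ L)
    (hconv : StrictConvexOn ℝ Set.univ L)
    (hsl : Tendsto (fun v => L v / ‖v‖)
      (comap (fun v : EuclideanSpace ℝ (Fin n) => ‖v‖) atTop) atTop) :
    Function.Bijective (fun v : EuclideanSpace ℝ (Fin n) => gradient L v) :=
  gradient_bijective_of_strictConvex_superlinear_general n L hdiff hconv hsl
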